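/- arXiv:1909.07662 — 2 statements merged into one kernel-verified Lean document; each statement's English description precedes it below -/
import Mathlib

section
/- Let α > 0, ρ > 0, and let F : L²_ρ(ℝ;H) → L²_ρ(ℝ;H) be Lipschitz continuous with Lipschitz constant L satisfying L < ρ^α. Then there exists exactly one u ∈ dom(∂_{0,ρ}^α) ⊆ L²_ρ(ℝ;H) such that ∂_{0,ρ}^α u = F(u). -/
/-!
Conjugating by the weight `e^{-ρt}` turns `L²_ρ(ℝ;H)` into `L²(ℝ;H)`, where `∂_{0,ρ}^{-α}` becomes
`𝓕⁻¹ M_{-α} 𝓕` with `|(iξ+ρ)^{-α}| ≤ ρ^{-α}`. So `∂_{0,ρ}^α u = F u` is the fixed-point equation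
`u = ∂_{0,ρ}^{-α} F u` for a map of Lipschitz constant `ρ^{-α} L < 1`, and Banach's fixed point
theorem gives existence and uniqueness.
-/

open MeasureTheory Filter Topology

/-- `u ∈ dom(∂_{0,ρ}^α)` and `∂_{0,ρ}^α u = w` in `L²_ρ(ℝ;H)`, where
`∂_{0,ρ}^α = L_ρ^* ∘ M_α ∘ L_ρ`, `L_ρ = 𝓕 ∘ e^{-ρm}` and `M_α` is multiplication by
`ξ ↦ (iξ+ρ)^α` (principal branch) with maximal domain. -/
def FracDerivEq {H : Type*} [NormedAddCommGroup H] [InnerProductSpace ℂ H]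
    [CompleteSpace H]
    (𝓕 : Lp H 2 (volume : Measure ℝ) ≃ₗᵢ[ℂ] Lp H 2 (volume : Measure ℝ))
    (ρ α : ℝ) (u w : ℝ → H) : Prop :=
  ∃ (hu : MemLp (fun t : ℝ => Real.exp (-(ρ * t)) • u t) 2 volume)
    (hm : MemLp (fun ξ : ℝ =>
      ((Complex.I * ξ + ρ) ^ (α : ℂ)) • (𝓕 (hu.toLp _) : ℝ → H) ξ) 2 volume),
    (𝓕.symm (hm.toLp _) : ℝ → H) =ᵐ[volume]
      fun t : ℝ => Real.exp (-(ρ * t)) • w t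

open scoped ENNReal NNReal

noncomputable section

section Multiplier

variable {X E : Type*} [MeasurableSpace X] {μ : Measure X} {p : ℝ≥0∞}
  [NormedAddCommGroup E] [NormedSpace ℂ E]
  {m : X → ℂ} (hm : AEStronglyMeasurable m μ) {C : ℝ≥0} (hC : ∀ x, ‖m x‖ ≤ C)

def multiplierLp (f : Lp E p μ) : Lp E p μ :=
  (MemLp.of_le_mul (Lp.memLp f) (hm.smul (Lp.aestronglyMeasurable f))
    (ae_of_all _ fun x => (norm_smul (m x) (f x)).trans_le
      (mul_le_mul_of_nonneg_right (hC x) (norm_nonneg _)))).toLp (m • ⇑f)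

lemma coeFn_multiplierLp (f : Lp E p μ) : ⇑(multiplierLp hm hC f) =ᵐ[μ] m • ⇑f :=
  MemLp.coeFn_toLp _

lemma lipschitzWith_multiplierLp [Fact (1 ≤ p)] :
    LipschitzWith C (multiplierLp hm hC : Lp E p μ → Lp E p μ) := by
  intro f g
  rw [Lp.edist_def, Lp.edist_def]
  have hsub : ⇑(multiplierLp hm hC f) - ⇑(multiplierLp hm hC g) =ᵐ[μ] m • (⇑f - ⇑g) := by
    filter_upwards [coeFn_multiplierLp hm hC f, coeFn_multiplierLp hm hC g] with x hf hg
    simp only [Pi.sub_apply, Pi.smul_apply', hf, hg, smul_sub]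
  rw [eLpNorm_congr_ae hsub]
  refine eLpNorm_le_nnreal_smul_eLpNorm_of_ae_le_mul (ae_of_all _ fun x => ?_) p
  rw [Pi.smul_apply', nnnorm_smul]
  exact mul_le_mul_of_nonneg_right (NNReal.coe_le_coe.1 (hC x)) zero_le

end Multiplier

section Symbol

variable {ρ : ℝ}

def fracSymbol (ρ β ξ : ℝ) : ℂ := (Complex.I * ξ + ρ) ^ (β : ℂ)

lemma mem_slitPlane_I_mul_add (hρ : 0 < ρ) (ξ : ℝ) : Complex.I * ξ + ρ ∈ Complex.slitPlane :=
  Complex.mem_slitPlane_iff.2 (Or.inl (by simpa using hρ))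

lemma continuous_fracSymbol (hρ : 0 < ρ) (β : ℝ) : Continuous (fracSymbol ρ β) :=
  continuous_iff_continuousAt.2 fun ξ =>
    (by fun_prop : ContinuousAt (fun ξ : ℝ => Complex.I * ξ + ρ) ξ).cpow continuousAt_const
      (mem_slitPlane_I_mul_add hρ ξ)

lemma norm_fracSymbol_le (hρ : 0 < ρ) {β : ℝ} (hβ : β ≤ 0) (ξ : ℝ) :
    ‖fracSymbol ρ β ξ‖ ≤ ρ ^ β := by
  have hre : ρ ≤ ‖Complex.I * ξ + ρ‖ := by
    simpa [abs_of_pos hρ] using Complex.abs_re_le_norm (Complex.I * ξ + ρ)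
  rw [fracSymbol, Complex.norm_cpow_of_ne_zero (Complex.slitPlane_ne_zero
    (mem_slitPlane_I_mul_add hρ ξ))]
  simpa using Real.rpow_le_rpow_of_nonpos hρ hre hβ

lemma fracSymbol_mul_fracSymbol_neg (hρ : 0 < ρ) (α ξ : ℝ) :
    fracSymbol ρ α ξ * fracSymbol ρ (-α) ξ = 1 := by
  rw [fracSymbol, fracSymbol, Complex.ofReal_neg, Complex.cpow_neg]
  exact mul_inv_cancel₀ (Complex.cpow_ne_zero_iff.2
    (Or.inl (Complex.slitPlane_ne_zero (mem_slitPlane_I_mul_add hρ ξ))))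

end Symbol

section Weight

variable {H : Type*} [NormedAddCommGroup H] [NormedSpace ℝ H] {ρ : ℝ}

def expWeight (ρ : ℝ) (u : ℝ → H) : ℝ → H := fun t => Real.exp (-(ρ * t)) • u t

lemma expWeight_expWeight_neg (ρ : ℝ) (u : ℝ → H) : expWeight ρ (expWeight (-ρ) u) = u := by
  funext t
  simp only [expWeight, smul_smul, ← Real.exp_add]
  simp

lemma expWeight_neg_expWeight (ρ : ℝ) (u : ℝ → H) : expWeight (-ρ) (expWeight ρ u) = u := by
  simpa using expWeight_expWeight_neg (-ρ) u

lemma expWeight_sub (ρ : ℝ) (u v : ℝ → H) :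
    expWeight ρ (u - v) = expWeight ρ u - expWeight ρ v := by
  funext t
  simp only [expWeight, Pi.sub_apply, smul_sub]

lemma expWeight_neg_coeFn_toLp {u : ℝ → H} (hu : MemLp (expWeight ρ u) 2 volume) :
    expWeight (-ρ) (hu.toLp _) =ᵐ[volume] u := by
  filter_upwards [hu.coeFn_toLp] with t ht
  rw [← congrFun (expWeight_neg_expWeight ρ u) t]
  simp only [expWeight, ht]

lemma exists_toLp_expWeight_eq (f : Lp H 2 (volume : Measure ℝ)) :
    ∃ (u : ℝ → H) (hu : MemLp (expWeight ρ u) 2 volume), hu.toLp _ = f :=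
  ⟨expWeight (-ρ) f, by rw [expWeight_expWeight_neg]; exact Lp.memLp f,
    by simp only [expWeight_expWeight_neg, Lp.toLp_coeFn]⟩

lemma ae_eq_of_toLp_expWeight_eq {u v : ℝ → H} (hu : MemLp (expWeight ρ u) 2 volume)
    (hv : MemLp (expWeight ρ v) 2 volume) (h : hu.toLp _ = hv.toLp _) : u =ᵐ[volume] v :=
  (expWeight_neg_coeFn_toLp hu).symm.trans (h ▸ expWeight_neg_coeFn_toLp hv)

variable {F : (ℝ → H) → (ℝ → H)}
  (hmap : ∀ u : ℝ → H, MemLp (expWeight ρ u) 2 volume → MemLp (expWeight ρ (F u)) 2 volume)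

/-- `e^{-ρm} ∘ F ∘ e^{ρm}`, acting on `L²(ℝ;H)`. -/
def weightedLift (f : Lp H 2 (volume : Measure ℝ)) : Lp H 2 (volume : Measure ℝ) :=
  (hmap (expWeight (-ρ) f) (by rw [expWeight_expWeight_neg]; exact Lp.memLp f)).toLp _

lemma weightedLift_toLp
    (hcong : ∀ u v : ℝ → H, MemLp (expWeight ρ u) 2 volume → u =ᵐ[volume] v → F u =ᵐ[volume] F v)
    {u : ℝ → H} (hu : MemLp (expWeight ρ u) 2 volume) :
    weightedLift hmap (hu.toLp _) = (hmap u hu).toLp _ := by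
  refine MemLp.toLp_congr _ _ ?_
  have hmem : MemLp (expWeight ρ (expWeight (-ρ) (hu.toLp _))) 2 volume := by
    rw [expWeight_expWeight_neg]; exact Lp.memLp _
  filter_upwards [hcong _ u hmem (expWeight_neg_coeFn_toLp hu)] with t ht
  simp only [expWeight, ht]

lemma lipschitzWith_weightedLift {L : ℝ}
    (hlip : ∀ u v : ℝ → H, MemLp (expWeight ρ u) 2 volume → MemLp (expWeight ρ v) 2 volume →
      eLpNorm (expWeight ρ (F u - F v)) 2 volume ≤
        ENNReal.ofReal L * eLpNorm (expWeight ρ (u - v)) 2 volume) :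
    LipschitzWith L.toNNReal (weightedLift hmap) := by
  intro f g
  rw [Lp.edist_def, Lp.edist_def]
  have hsub : ⇑(weightedLift hmap f) - ⇑(weightedLift hmap g) =ᵐ[volume]
      expWeight ρ (F (expWeight (-ρ) f) - F (expWeight (-ρ) g)) := by
    rw [expWeight_sub]
    exact (MemLp.coeFn_toLp _).sub (MemLp.coeFn_toLp _)
  rw [eLpNorm_congr_ae hsub]
  have h := hlip _ _ (by rw [expWeight_expWeight_neg]; exact Lp.memLp f)
    (by rw [expWeight_expWeight_neg]; exact Lp.memLp g)
  rwa [expWeight_sub ρ (expWeight (-ρ) f), expWeight_expWeight_neg, expWeight_expWeight_neg] at h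

end Weight

section FixedPoint

variable {H : Type*} [NormedAddCommGroup H] [InnerProductSpace ℂ H] {ρ α : ℝ}
  (𝓕 : Lp H 2 (volume : Measure ℝ) ≃ₗᵢ[ℂ] Lp H 2 (volume : Measure ℝ))

/-- `e^{-ρm} ∘ ∂_{0,ρ}^{-α} ∘ e^{ρm} = 𝓕⁻¹ M_{-α} 𝓕`, acting on `L²(ℝ;H)`. -/
def fracIntegralL2 (hρ : 0 < ρ) (hα : 0 ≤ α) (f : Lp H 2 (volume : Measure ℝ)) :
    Lp H 2 (volume : Measure ℝ) :=
  𝓕.symm (multiplierLp (continuous_fracSymbol hρ (-α)).aestronglyMeasurable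
    (C := (ρ ^ (-α)).toNNReal)
    (fun ξ => (norm_fracSymbol_le hρ (neg_nonpos.2 hα) ξ).trans (Real.le_coe_toNNReal _)) (𝓕 f))

lemma coeFn_apply_fracIntegralL2 (hρ : 0 < ρ) (hα : 0 ≤ α) (f : Lp H 2 (volume : Measure ℝ)) :
    ⇑(𝓕 (fracIntegralL2 𝓕 hρ hα f)) =ᵐ[volume] fracSymbol ρ (-α) • ⇑(𝓕 f) := by
  rw [fracIntegralL2, LinearIsometryEquiv.apply_symm_apply]
  exact coeFn_multiplierLp _ _ _

lemma lipschitzWith_fracIntegralL2 (hρ : 0 < ρ) (hα : 0 ≤ α) :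
    LipschitzWith (ρ ^ (-α)).toNNReal (fracIntegralL2 𝓕 hρ hα) := by
  refine (𝓕.symm.lipschitz.comp ((lipschitzWith_multiplierLp _ _).comp 𝓕.lipschitz)).weaken ?_
  rw [one_mul, mul_one]

lemma fracDerivEq_iff_exists [CompleteSpace H] {u w : ℝ → H} :
    FracDerivEq 𝓕 ρ α u w ↔
      ∃ (hu : MemLp (expWeight ρ u) 2 volume)
        (hm : MemLp (fracSymbol ρ α • ⇑(𝓕 (hu.toLp _))) 2 volume),
        ⇑(𝓕.symm (hm.toLp _)) =ᵐ[volume] expWeight ρ w :=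
  Iff.rfl

/-- `∂_{0,ρ}^α u = w` if and only if `u = ∂_{0,ρ}^{-α} w`. -/
lemma fracDerivEq_iff [CompleteSpace H] (hρ : 0 < ρ) (hα : 0 ≤ α) {u w : ℝ → H}
    (hw : MemLp (expWeight ρ w) 2 volume) :
    FracDerivEq 𝓕 ρ α u w ↔
      ∃ hu : MemLp (expWeight ρ u) 2 volume, hu.toLp _ = fracIntegralL2 𝓕 hρ hα (hw.toLp _) := by
  rw [fracDerivEq_iff_exists]
  constructor
  · rintro ⟨hu, hm, heq⟩
    have hmw : hm.toLp _ = 𝓕 (hw.toLp _) :=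
      (𝓕.symm_apply_eq).1 (Lp.ext (heq.trans hw.coeFn_toLp.symm))
    refine ⟨hu, (𝓕.eq_symm_apply).2 (Lp.ext ?_)⟩
    rw [← hmw]
    filter_upwards [coeFn_multiplierLp _ _ (hm.toLp _), hm.coeFn_toLp] with ξ h1 h2
    rw [h1, Pi.smul_apply', h2, Pi.smul_apply', smul_smul, mul_comm,
      fracSymbol_mul_fracSymbol_neg hρ, one_smul]
  · rintro ⟨hu, hfix⟩
    have hsym : fracSymbol ρ α • ⇑(𝓕 (hu.toLp _)) =ᵐ[volume] ⇑(𝓕 (hw.toLp _)) := by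
      filter_upwards [hfix ▸ coeFn_apply_fracIntegralL2 𝓕 hρ hα (hw.toLp _)] with ξ h
      rw [Pi.smul_apply', h, Pi.smul_apply', smul_smul, fracSymbol_mul_fracSymbol_neg hρ, one_smul]
    have hm := (Lp.memLp (𝓕 (hw.toLp _))).ae_eq hsym.symm
    refine ⟨hu, hm, ?_⟩
    rw [show hm.toLp _ = 𝓕 (hw.toLp _) from Lp.ext (hm.coeFn_toLp.trans hsym),
      LinearIsometryEquiv.symm_apply_apply]
    exact hw.coeFn_toLp

variable [CompleteSpace H] {F : (ℝ → H) → (ℝ → H)}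
  (hmap : ∀ u : ℝ → H, MemLp (expWeight ρ u) 2 volume → MemLp (expWeight ρ (F u)) 2 volume)

lemma fracDerivEq_iff_isFixedPt (hρ : 0 < ρ) (hα : 0 ≤ α)
    (hcong : ∀ u v : ℝ → H, MemLp (expWeight ρ u) 2 volume → u =ᵐ[volume] v → F u =ᵐ[volume] F v)
    (v : ℝ → H) :
    FracDerivEq 𝓕 ρ α v (F v) ↔ ∃ hv : MemLp (expWeight ρ v) 2 volume,
      Function.IsFixedPt (fracIntegralL2 𝓕 hρ hα ∘ weightedLift hmap) (hv.toLp _) := by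
  constructor
  · intro h
    have hv : MemLp (expWeight ρ v) 2 volume := h.fst
    obtain ⟨_, hfix⟩ := (fracDerivEq_iff 𝓕 hρ hα (hmap v hv)).1 h
    refine ⟨hv, ?_⟩
    rw [Function.IsFixedPt, Function.comp_apply, weightedLift_toLp hmap hcong hv, ← hfix]
  · rintro ⟨hv, hfix⟩
    rw [Function.IsFixedPt, Function.comp_apply, weightedLift_toLp hmap hcong hv] at hfix
    exact (fracDerivEq_iff 𝓕 hρ hα (hmap v hv)).2 ⟨hv, hfix.symm⟩

end FixedPoint

theorem stmt15_general
    {H : Type*} [NormedAddCommGroup H] [InnerProductSpace ℂ H] [CompleteSpace H]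
    (𝓕 : Lp H 2 (volume : Measure ℝ) ≃ₗᵢ[ℂ] Lp H 2 (volume : Measure ℝ))
    (α ρ L : ℝ) (hα : 0 < α) (hρ : 0 < ρ) (hLρ : L < ρ ^ α)
    (F : (ℝ → H) → (ℝ → H))
    (hmap : ∀ u : ℝ → H, MemLp (fun t : ℝ => Real.exp (-(ρ * t)) • u t) 2 volume →
      MemLp (fun t : ℝ => Real.exp (-(ρ * t)) • F u t) 2 volume)
    (hcong : ∀ u v : ℝ → H,
      MemLp (fun t : ℝ => Real.exp (-(ρ * t)) • u t) 2 volume →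
      u =ᵐ[volume] v → F u =ᵐ[volume] F v)
    (hlip : ∀ u v : ℝ → H,
      MemLp (fun t : ℝ => Real.exp (-(ρ * t)) • u t) 2 volume →
      MemLp (fun t : ℝ => Real.exp (-(ρ * t)) • v t) 2 volume →
      eLpNorm (fun t : ℝ => Real.exp (-(ρ * t)) • (F u t - F v t)) 2 volume ≤
        ENNReal.ofReal L *
          eLpNorm (fun t : ℝ => Real.exp (-(ρ * t)) • (u t - v t)) 2 volume) :
    ∃ u : ℝ → H, FracDerivEq 𝓕 ρ α u (F u) ∧
      ∀ v : ℝ → H, FracDerivEq 𝓕 ρ α v (F v) → v =ᵐ[volume] u := by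
  let Φ := fracIntegralL2 𝓕 hρ hα.le ∘ weightedLift hmap
  have hK : (ρ ^ (-α)).toNNReal * L.toNNReal < 1 := by
    have hρα : 0 < ρ ^ α := Real.rpow_pos_of_pos hρ α
    rw [← NNReal.coe_lt_coe, NNReal.coe_mul, Real.coe_toNNReal', Real.coe_toNNReal',
      NNReal.coe_one, Real.rpow_neg hρ.le, max_eq_left (inv_pos.2 hρα).le,
      inv_mul_lt_iff₀ hρα, mul_one]
    exact max_lt hLρ hρα
  have hΦ : ContractingWith _ Φ :=
    ⟨hK, (lipschitzWith_fracIntegralL2 𝓕 hρ hα.le).comp (lipschitzWith_weightedLift hmap hlip)⟩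
  obtain ⟨u, hu, hu₀⟩ := exists_toLp_expWeight_eq (ρ := ρ) (ContractingWith.fixedPoint Φ hΦ)
  have hsol := fracDerivEq_iff_isFixedPt 𝓕 hmap hρ hα.le hcong
  refine ⟨u, (hsol u).2 ⟨hu, hu₀ ▸ hΦ.fixedPoint_isFixedPt⟩, fun v hv => ?_⟩
  obtain ⟨hv, hfix⟩ := (hsol v).1 hv
  exact ae_eq_of_toLp_expWeight_eq hv hu ((hΦ.fixedPoint_unique hfix).trans hu₀.symm)

/-- let `α > 0`, `ρ > 0` and let `F : L²_ρ(ℝ;H) → L²_ρ(ℝ;H)` be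
Lipschitz with constant `L < ρ^α` (here `F` is given on representatives: it maps
`L²_ρ` into `L²_ρ`, respects a.e. equality, and is `L`-Lipschitz for the `L²_ρ`
norm).  Then there is exactly one `u ∈ dom(∂_{0,ρ}^α)` with `∂_{0,ρ}^α u = F(u)`
(uniqueness up to a.e. equality). -/
theorem stmt15
    {H : Type*} [NormedAddCommGroup H] [InnerProductSpace ℂ H] [CompleteSpace H]
    (𝓕 : Lp H 2 (volume : Measure ℝ) ≃ₗᵢ[ℂ] Lp H 2 (volume : Measure ℝ))
    (h𝓕 : ∀ (g : ℝ → H) (_ : Integrable g volume) (hg : MemLp g 2 volume),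
      (𝓕 (hg.toLp g) : ℝ → H) =ᵐ[volume]
        fun ξ : ℝ => (Real.sqrt (2 * Real.pi))⁻¹ •
          ∫ t : ℝ, Complex.exp (-(Complex.I * ξ * t)) • g t)
    (α ρ L : ℝ) (hα : 0 < α) (hρ : 0 < ρ) (hL : 0 ≤ L) (hLρ : L < ρ ^ α)
    (F : (ℝ → H) → (ℝ → H))
    (hmap : ∀ u : ℝ → H, MemLp (fun t : ℝ => Real.exp (-(ρ * t)) • u t) 2 volume →
      MemLp (fun t : ℝ => Real.exp (-(ρ * t)) • F u t) 2 volume)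
    (hcong : ∀ u v : ℝ → H,
      MemLp (fun t : ℝ => Real.exp (-(ρ * t)) • u t) 2 volume →
      u =ᵐ[volume] v → F u =ᵐ[volume] F v)
    (hlip : ∀ u v : ℝ → H,
      MemLp (fun t : ℝ => Real.exp (-(ρ * t)) • u t) 2 volume →
      MemLp (fun t : ℝ => Real.exp (-(ρ * t)) • v t) 2 volume →
      eLpNorm (fun t : ℝ => Real.exp (-(ρ * t)) • (F u t - F v t)) 2 volume ≤
        ENNReal.ofReal L *
          eLpNorm (fun t : ℝ => Real.exp (-(ρ * t)) • (u t - v t)) 2 volume) :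
    ∃ u : ℝ → H, FracDerivEq 𝓕 ρ α u (F u) ∧
      ∀ v : ℝ → H, FracDerivEq 𝓕 ρ α v (F v) → v =ᵐ[volume] u :=
  stmt15_general 𝓕 α ρ L hα hρ hLρ F hmap hcong hlip
end
end

section
/- Let α > 0, ρ₀ > 0, c ≥ 0, and for every μ ≥ ρ₀ let F_μ : L²_μ(ℝ;H) → L²_μ(ℝ;H) be Lipschitz continuous with Lipschitz constant at most c. Assume the family is consistent: for all ν ≥ μ ≥ ρ₀ and every f that belongs (as a locally integrable function) to both L²_μ(ℝ;H) and L²_ν(ℝ;H), one has F_μ(f) = F_ν(f) almost everywhere. Then for every ρ ≥ ρ₀ the map ∂_{0,ρ}^{−α} ∘ F_ρ on L²_ρ(ℝ;H) is causal: for all a ∈ ℝ and all u, v ∈ L²_ρ(ℝ;H) with u = v almost everywhere on (−∞,a), one has ∂_{0,ρ}^{−α}F_ρ(u) = ∂_{0,ρ}^{−α}F_ρ(v) almost everywhere on (−∞,a). -/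
open MeasureTheory Filter Topology
open scoped ENNReal NNReal

private lemma tail_small {h : ℝ → ℝ≥0∞} (hfin : ∫⁻ t, h t ≠ ⊤) {ε : ℝ≥0∞} (hε : ε ≠ 0) :
    ∃ b : ℝ, ∫⁻ t in Set.Iio b, h t < ε := by
  set ν := (volume : Measure ℝ).withDensity h with hνdef
  have happ : ∀ b : ℝ, ν (Set.Iio b) = ∫⁻ t in Set.Iio b, h t := fun b =>
    withDensity_apply h measurableSet_Iio
  have huniv : ν Set.univ ≠ ⊤ := by
    rw [hνdef, withDensity_apply h MeasurableSet.univ, Measure.restrict_univ]; exact hfin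
  have hmono : Antitone fun n : ℕ => Set.Iio (-(n : ℝ)) := fun m n hmn =>
    Set.Iio_subset_Iio (neg_le_neg (by exact_mod_cast hmn))
  have hinter : (⋂ n : ℕ, Set.Iio (-(n : ℝ))) = ∅ := by
    ext t
    simp only [Set.mem_iInter, Set.mem_Iio, Set.mem_empty_iff_false, iff_false, not_forall,
      not_lt]
    obtain ⟨n, hn⟩ := exists_nat_gt (-t)
    exact ⟨n, by linarith⟩
  have htend := tendsto_measure_iInter_atTop (μ := ν)
    (fun n => measurableSet_Iio.nullMeasurableSet) hmono
    ⟨0, ne_top_of_le_ne_top huniv (measure_mono (Set.subset_univ _))⟩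
  rw [hinter, measure_empty] at htend
  obtain ⟨n, hn⟩ := (htend.eventually_lt_const (pos_iff_ne_zero.mpr hε)).exists
  exact ⟨-(n : ℝ), by rw [← happ]; exact hn⟩

private lemma eLp2 {H : Type*} [NormedAddCommGroup H] (f : ℝ → H) (μ : Measure ℝ) :
    eLpNorm f 2 μ = (∫⁻ t, (‖f t‖₊ : ℝ≥0∞) ^ 2 ∂μ) ^ (1 / 2 : ℝ) := by
  rw [eLpNorm_eq_lintegral_rpow_enorm_toReal (by norm_num) (by norm_num)]
  norm_num [ENNReal.rpow_two, enorm_eq_nnnorm]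

private lemma key {H : Type*} [NormedAddCommGroup H] [InnerProductSpace ℂ H] [CompleteSpace H]
    (ρ₀ c : ℝ) (hρ₀ : 0 < ρ₀)
    (F : ℝ → (ℝ → H) → (ℝ → H))
    (hmap : ∀ μ ≥ ρ₀, ∀ u : ℝ → H,
      MemLp (fun t : ℝ => Real.exp (-(μ * t)) • u t) 2 volume →
      MemLp (fun t : ℝ => Real.exp (-(μ * t)) • F μ u t) 2 volume)
    (hlip : ∀ μ ≥ ρ₀, ∀ u v : ℝ → H,
      MemLp (fun t : ℝ => Real.exp (-(μ * t)) • u t) 2 volume →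
      MemLp (fun t : ℝ => Real.exp (-(μ * t)) • v t) 2 volume →
      eLpNorm (fun t : ℝ => Real.exp (-(μ * t)) • (F μ u t - F μ v t)) 2 volume ≤
        ENNReal.ofReal c *
          eLpNorm (fun t : ℝ => Real.exp (-(μ * t)) • (u t - v t)) 2 volume)
    (hcons : ∀ μ ν : ℝ, ρ₀ ≤ μ → μ ≤ ν → ∀ g : ℝ → H,
      MemLp (fun t : ℝ => Real.exp (-(μ * t)) • g t) 2 volume →
      MemLp (fun t : ℝ => Real.exp (-(ν * t)) • g t) 2 volume →
      F μ g =ᵐ[volume] F ν g)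
    (ρ : ℝ) (hρ : ρ₀ ≤ ρ) (a : ℝ) (u v : ℝ → H)
    (hu : MemLp (fun t : ℝ => Real.exp (-(ρ * t)) • u t) 2 volume)
    (hv : MemLp (fun t : ℝ => Real.exp (-(ρ * t)) • v t) 2 volume)
    (huv : u =ᵐ[volume.restrict (Set.Iio a)] v) :
    F ρ u =ᵐ[volume.restrict (Set.Iio a)] F ρ v := by
  -- measurability transfer
  have hsm : ∀ (μ : ℝ) (w : ℝ → H), AEStronglyMeasurable w volume →
      AEStronglyMeasurable (fun t => Real.exp (-(μ * t)) • w t) volume := fun μ w hw =>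
    ((Real.continuous_exp.comp
      (continuous_const.mul continuous_id).neg).aestronglyMeasurable).smul hw
  have hsm' : ∀ (μ : ℝ) (w : ℝ → H),
      AEStronglyMeasurable (fun t => Real.exp (-(μ * t)) • w t) volume →
      AEStronglyMeasurable w volume := by
    intro μ w hw
    have hwe : w = fun t => Real.exp (μ * t) • Real.exp (-(μ * t)) • w t := by
      funext t
      rw [smul_smul, ← Real.exp_add]
      simp
    rw [hwe]
    exact ((Real.continuous_exp.comp
      (continuous_const.mul continuous_id)).aestronglyMeasurable).smul hw
  have hum : AEStronglyMeasurable u volume := hsm' ρ u hu.aestronglyMeasurable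
  have hvm : AEStronglyMeasurable v volume := hsm' ρ v hv.aestronglyMeasurable
  -- truncations are in all L²_ν, ν ≥ ρ
  have trunc : ∀ b : ℝ, ∀ w : ℝ → H, AEStronglyMeasurable w volume →
      MemLp (fun t => Real.exp (-(ρ * t)) • w t) 2 volume →
      ∀ ν, ρ ≤ ν →
      MemLp (fun t => Real.exp (-(ν * t)) • Set.indicator (Set.Ici b) w t) 2 volume := by
    intro b w hwm hw ν hν
    have hfact : (fun t => Real.exp (-(ρ * t)) • Set.indicator (Set.Ici b) w t)
        = Set.indicator (Set.Ici b) (fun t => Real.exp (-(ρ * t)) • w t) := by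
      funext t
      by_cases ht : t ∈ Set.Ici b
      · rw [Set.indicator_of_mem ht, Set.indicator_of_mem ht]
      · rw [Set.indicator_of_notMem ht, Set.indicator_of_notMem ht, smul_zero]
    have hρb : MemLp (fun t => Real.exp (-(ρ * t)) • Set.indicator (Set.Ici b) w t) 2 volume := by
      rw [hfact]; exact hw.indicator measurableSet_Ici
    refine MemLp.of_le (hρb.const_smul (Real.exp ((ρ - ν) * b)))
      (hsm ν _ (hwm.indicator measurableSet_Ici)) ?_
    refine Filter.Eventually.of_forall fun t => ?_
    by_cases ht : t ∈ Set.Ici b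
    · have hbt : b ≤ t := ht
      simp only [Pi.smul_apply, norm_smul, Real.norm_eq_abs, Real.abs_exp]
      rw [← mul_assoc, ← Real.exp_add]
      apply mul_le_mul_of_nonneg_right _ (norm_nonneg _)
      apply Real.exp_le_exp.mpr
      nlinarith
    · simp [Set.indicator_of_notMem ht]
  -- Step C: causality for truncated inputs
  have stepC : ∀ b : ℝ,
      F ρ (Set.indicator (Set.Ici b) u) =ᵐ[volume.restrict (Set.Iio a)]
      F ρ (Set.indicator (Set.Ici b) v) := by
    intro b
    set ub : ℝ → H := Set.indicator (Set.Ici b) u with hub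
    set vb : ℝ → H := Set.indicator (Set.Ici b) v with hvb
    have hUρ := trunc b u hum hu ρ le_rfl
    have hVρ := trunc b v hvm hv ρ le_rfl
    -- the truncated difference vanishes below `a`
    have hwb : ∀ ν : ℝ, (fun t => Real.exp (-(ν * t)) • (ub t - vb t)) =ᵐ[volume]
        Set.indicator (Set.Ici a) (fun t => Real.exp (-(ν * t)) • (ub t - vb t)) := by
      intro ν
      filter_upwards [(ae_restrict_iff' measurableSet_Iio).mp huv] with t ht
      by_cases hta : t ∈ Set.Ici a
      · rw [Set.indicator_of_mem hta]
      · rw [Set.indicator_of_notMem hta]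
        have h1 : u t = v t := ht (by simpa [Set.mem_Iio] using not_le.mp (by simpa using hta))
        have h2 : ub t = vb t := by
          by_cases htb : t ∈ Set.Ici b
          · rw [hub, hvb, Set.indicator_of_mem htb, Set.indicator_of_mem htb, h1]
          · rw [hub, hvb, Set.indicator_of_notMem htb, Set.indicator_of_notMem htb]
        rw [h2, sub_self, smul_zero]
    set G : ℕ → ℝ → H := fun n => Set.indicator (Set.Ici a)
      (fun t => (Real.exp ((n : ℝ) * (a - t)) * Real.exp (-(ρ * t))) • (ub t - vb t)) with hG
    set Ib : ℝ≥0∞ := eLpNorm (fun t => Real.exp (-(ρ * t)) • (F ρ ub t - F ρ vb t)) 2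
      (volume.restrict (Set.Iio a)) with hIbdef
    have hchain : ∀ n : ℕ, Ib ≤ ENNReal.ofReal c * eLpNorm (G n) 2 volume := by
      intro n
      set ν : ℝ := ρ + n with hνdef
      have hνρ : ρ ≤ ν := le_add_of_nonneg_right n.cast_nonneg
      have hν₀ : ρ₀ ≤ ν := le_trans hρ hνρ
      have hUν := trunc b u hum hu ν hνρ
      have hVν := trunc b v hvm hv ν hνρ
      have hconsU : F ρ ub =ᵐ[volume] F ν ub := hcons ρ ν hρ hνρ ub hUρ hUν
      have hconsV : F ρ vb =ᵐ[volume] F ν vb := hcons ρ ν hρ hνρ vb hVρ hVν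
      have h1 : Ib ≤ eLpNorm
          (fun t => Real.exp ((n : ℝ) * a) • Real.exp (-(ν * t)) • (F ρ ub t - F ρ vb t)) 2
          (volume.restrict (Set.Iio a)) := by
        rw [hIbdef]
        apply eLpNorm_mono_ae
        filter_upwards [ae_restrict_mem measurableSet_Iio] with t ht
        have hta : t < a := ht
        simp only [norm_smul, Real.norm_eq_abs, Real.abs_exp]
        rw [← mul_assoc, ← Real.exp_add]
        apply mul_le_mul_of_nonneg_right _ (norm_nonneg _)
        apply Real.exp_le_exp.mpr
        have hn0 : (0 : ℝ) ≤ (n : ℝ) := n.cast_nonneg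
        rw [hνdef]
        nlinarith
      have h2 : eLpNorm
          (fun t => Real.exp ((n : ℝ) * a) • Real.exp (-(ν * t)) • (F ρ ub t - F ρ vb t)) 2
          (volume.restrict (Set.Iio a))
          = (‖Real.exp ((n : ℝ) * a)‖₊ : ℝ≥0∞) *
            eLpNorm (fun t => Real.exp (-(ν * t)) • (F ρ ub t - F ρ vb t)) 2
              (volume.restrict (Set.Iio a)) :=
        eLpNorm_const_smul (Real.exp ((n : ℝ) * a))
          (fun t => Real.exp (-(ν * t)) • (F ρ ub t - F ρ vb t)) 2 _
      have h3 : eLpNorm (fun t => Real.exp (-(ν * t)) • (F ρ ub t - F ρ vb t)) 2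
          (volume.restrict (Set.Iio a))
          = eLpNorm (fun t => Real.exp (-(ν * t)) • (F ν ub t - F ν vb t)) 2
          (volume.restrict (Set.Iio a)) := by
        apply eLpNorm_congr_ae
        filter_upwards [(hconsU.and hconsV).filter_mono (ae_mono Measure.restrict_le_self)]
          with t ht
        rw [ht.1, ht.2]
      have h4 : eLpNorm (fun t => Real.exp (-(ν * t)) • (F ν ub t - F ν vb t)) 2
          (volume.restrict (Set.Iio a))
          ≤ ENNReal.ofReal c * eLpNorm (fun t => Real.exp (-(ν * t)) • (ub t - vb t)) 2 volume :=
        le_trans (eLpNorm_mono_measure _ Measure.restrict_le_self) (hlip ν hν₀ ub vb hUν hVν)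
      have h5 : eLpNorm (fun t => Real.exp (-(ν * t)) • (ub t - vb t)) 2 volume
          = eLpNorm (Set.indicator (Set.Ici a)
              (fun t => Real.exp (-(ν * t)) • (ub t - vb t))) 2 volume :=
        eLpNorm_congr_ae (hwb ν)
      have h6 : (fun t => Real.exp ((n : ℝ) * a) • Set.indicator (Set.Ici a)
            (fun t => Real.exp (-(ν * t)) • (ub t - vb t)) t) = G n := by
        funext t
        by_cases hta : t ∈ Set.Ici a
        · rw [hG]
          simp only [Set.indicator_of_mem hta]
          rw [smul_smul, ← Real.exp_add, ← Real.exp_add]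
          congr 1
          rw [hνdef]; ring
        · rw [hG]
          simp [Set.indicator_of_notMem hta]
      have h7 : (‖Real.exp ((n : ℝ) * a)‖₊ : ℝ≥0∞) *
          eLpNorm (Set.indicator (Set.Ici a)
            (fun t => Real.exp (-(ν * t)) • (ub t - vb t))) 2 volume
          = eLpNorm (G n) 2 volume := by
        rw [← h6]
        exact (eLpNorm_const_smul (Real.exp ((n : ℝ) * a)) _ 2 _).symm
      calc Ib ≤ _ := h1
        _ = _ := h2
        _ = (‖Real.exp ((n : ℝ) * a)‖₊ : ℝ≥0∞) *
            eLpNorm (fun t => Real.exp (-(ν * t)) • (F ν ub t - F ν vb t)) 2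
              (volume.restrict (Set.Iio a)) := by rw [h3]
        _ ≤ (‖Real.exp ((n : ℝ) * a)‖₊ : ℝ≥0∞) *
            (ENNReal.ofReal c * eLpNorm (fun t => Real.exp (-(ν * t)) • (ub t - vb t)) 2
              volume) := mul_le_mul_right h4 _
        _ = ENNReal.ofReal c * ((‖Real.exp ((n : ℝ) * a)‖₊ : ℝ≥0∞) *
            eLpNorm (Set.indicator (Set.Ici a)
              (fun t => Real.exp (-(ν * t)) • (ub t - vb t))) 2 volume) := by
              rw [h5]; ring
        _ = ENNReal.ofReal c * eLpNorm (G n) 2 volume := by rw [h7]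
    -- the bound tends to 0
    have hwmemρ : MemLp (fun t => Real.exp (-(ρ * t)) • (ub t - vb t)) 2 volume := by
      have he : (fun t => Real.exp (-(ρ * t)) • (ub t - vb t))
          = fun t => (Real.exp (-(ρ * t)) • ub t) - (Real.exp (-(ρ * t)) • vb t) := by
        funext t; rw [smul_sub]
      rw [he]
      exact hUρ.sub hVρ
    have hbound_fin : ∫⁻ t, (‖Real.exp (-(ρ * t)) • (ub t - vb t)‖₊ : ℝ≥0∞) ^ 2 ∂volume ≠ ⊤ := by
      have h := lintegral_rpow_enorm_lt_top_of_eLpNorm_lt_top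
        (p := 2) (by norm_num) (by norm_num) hwmemρ.2
      rw [show ((2 : ℝ≥0∞).toReal) = (2 : ℝ) by norm_num] at h
      simp only [ENNReal.rpow_two, enorm_eq_nnnorm] at h
      exact h.ne
    have hGm : ∀ n : ℕ, AEStronglyMeasurable (G n) volume := by
      intro n
      rw [hG]
      refine AEStronglyMeasurable.indicator ?_ measurableSet_Ici
      exact (((Real.continuous_exp.comp (continuous_const.mul
        (continuous_const.sub continuous_id))).mul (Real.continuous_exp.comp
        (continuous_const.mul continuous_id).neg)).aestronglyMeasurable).smul
        ((hum.indicator measurableSet_Ici).sub (hvm.indicator measurableSet_Ici))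
    have hL : Tendsto (fun n => ∫⁻ t, (‖G n t‖₊ : ℝ≥0∞) ^ 2 ∂volume) atTop (𝓝 0) := by
      have hzero : (0 : ℝ≥0∞) = ∫⁻ _ : ℝ, (0 : ℝ≥0∞) ∂volume := by simp
      rw [hzero]
      refine tendsto_lintegral_of_dominated_convergence'
        (fun t => (‖Real.exp (-(ρ * t)) • (ub t - vb t)‖₊ : ℝ≥0∞) ^ 2)
        (fun n => ((hGm n).enorm).pow_const 2) ?_ hbound_fin ?_
      · intro n
        refine Filter.Eventually.of_forall fun t => ?_
        have hnorm : ‖G n t‖ ≤ ‖Real.exp (-(ρ * t)) • (ub t - vb t)‖ := by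
          by_cases hta : t ∈ Set.Ici a
          · rw [hG]
            simp only [Set.indicator_of_mem hta, norm_smul, Real.norm_eq_abs, Real.abs_exp,
              abs_mul]
            apply mul_le_mul_of_nonneg_right _ (norm_nonneg _)
            have hat : a ≤ t := hta
            have : Real.exp ((n : ℝ) * (a - t)) ≤ 1 := by
              apply Real.exp_le_one_iff.mpr
              have hn0 : (0 : ℝ) ≤ (n : ℝ) := n.cast_nonneg
              nlinarith
            nlinarith [Real.exp_pos (-(ρ * t)), Real.exp_pos ((n : ℝ) * (a - t))]
          · rw [hG]
            simp only [Set.indicator_of_notMem hta, norm_zero]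
            positivity
        have hnn : ‖G n t‖₊ ≤ ‖Real.exp (-(ρ * t)) • (ub t - vb t)‖₊ := hnorm
        exact pow_le_pow_left' (ENNReal.coe_le_coe.mpr hnn) 2
      · have hane : ∀ᵐ t : ℝ ∂volume, t ≠ a := by
          refine (ae_iff.mpr ?_)
          simpa using Real.volume_singleton (a := a)
        filter_upwards [hane] with t hta
        rcases lt_or_gt_of_ne hta with hlt | hgt
        · have hnot : t ∉ Set.Ici a := by simpa using not_le.mpr hlt
          have : ∀ n : ℕ, G n t = 0 := by
            intro n; rw [hG]; simp [Set.indicator_of_notMem hnot]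
          simp only [this, nnnorm_zero, ENNReal.coe_zero]
          simpa using tendsto_const_nhds
        · have hmem : t ∈ Set.Ici a := le_of_lt hgt
          have hGeq : ∀ n : ℕ, G n t
              = ((Real.exp (a - t)) ^ n * Real.exp (-(ρ * t))) • (ub t - vb t) := by
            intro n
            rw [hG]
            simp only [Set.indicator_of_mem hmem]
            rw [← Real.exp_nat_mul]
          have hr1 : Real.exp (a - t) < 1 := Real.exp_lt_one_iff.mpr (by linarith)
          have htend0 : Tendsto (fun n : ℕ => (Real.exp (a - t)) ^ n * Real.exp (-(ρ * t)))
              atTop (𝓝 0) := by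
            simpa using (tendsto_pow_atTop_nhds_zero_of_lt_one
              (le_of_lt (Real.exp_pos _)) hr1).mul_const (Real.exp (-(ρ * t)))
          have hGt : Tendsto (fun n : ℕ => G n t) atTop (𝓝 0) := by
            simp only [hGeq]
            simpa using htend0.smul_const (ub t - vb t)
          have h2 := ENNReal.Tendsto.pow (n := 2) (ENNReal.tendsto_coe.mpr hGt.nnnorm)
          simpa using h2
    have hGtend : Tendsto (fun n => eLpNorm (G n) 2 volume) atTop (𝓝 0) := by
      have hcont := (ENNReal.continuous_rpow_const (y := (1 / 2 : ℝ))).tendsto 0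
      have hcomp := hcont.comp hL
      simp only [Function.comp_def] at hcomp
      have : ((0 : ℝ≥0∞)) ^ (1 / 2 : ℝ) = 0 := by
        apply ENNReal.zero_rpow_of_pos; norm_num
      rw [this] at hcomp
      have heq : ∀ n : ℕ, eLpNorm (G n) 2 volume
          = (∫⁻ t, (‖G n t‖₊ : ℝ≥0∞) ^ 2 ∂volume) ^ (1 / 2 : ℝ) := fun n => eLp2 (G n) volume
      simpa only [heq] using hcomp
    have hIb0 : Ib = 0 := by
      refine le_antisymm ?_ (by positivity)
      have hmul : Tendsto (fun n => ENNReal.ofReal c * eLpNorm (G n) 2 volume) atTop (𝓝 0) := by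
        simpa using ENNReal.Tendsto.const_mul hGtend (Or.inr ENNReal.ofReal_ne_top)
      exact ge_of_tendsto' hmul hchain
    -- from `Ib = 0` conclude a.e. equality on `Iio a`
    have hsub : AEStronglyMeasurable (fun t => Real.exp (-(ρ * t)) • (F ρ ub t - F ρ vb t))
        (volume.restrict (Set.Iio a)) := by
      have he : (fun t => Real.exp (-(ρ * t)) • (F ρ ub t - F ρ vb t))
          = fun t => (Real.exp (-(ρ * t)) • F ρ ub t) - (Real.exp (-(ρ * t)) • F ρ vb t) := by
        funext t; rw [smul_sub]
      rw [he]
      exact (((hmap ρ hρ ub hUρ).aestronglyMeasurable).sub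
        ((hmap ρ hρ vb hVρ).aestronglyMeasurable)).restrict
    have hae := (eLpNorm_eq_zero_iff hsub (by norm_num)).mp hIb0
    filter_upwards [hae] with t ht
    have := ht
    simp only [Pi.zero_apply, smul_eq_zero] at this
    rcases this with h | h
    · exact absurd h (Real.exp_ne_zero _)
    · exact sub_eq_zero.mp h
  -- Step D: pass to the limit in the truncation parameter
  set I : ℝ≥0∞ := eLpNorm (fun t => Real.exp (-(ρ * t)) • (F ρ u t - F ρ v t)) 2
    (volume.restrict (Set.Iio a)) with hIdef
  have hufin : ∫⁻ t, (‖Real.exp (-(ρ * t)) • u t‖₊ : ℝ≥0∞) ^ 2 ∂volume ≠ ⊤ := by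
    have h := lintegral_rpow_enorm_lt_top_of_eLpNorm_lt_top
      (p := 2) (by norm_num) (by norm_num) hu.2
    rw [show ((2 : ℝ≥0∞).toReal) = (2 : ℝ) by norm_num] at h
    simp only [ENNReal.rpow_two, enorm_eq_nnnorm] at h
    exact h.ne
  have hvfin : ∫⁻ t, (‖Real.exp (-(ρ * t)) • v t‖₊ : ℝ≥0∞) ^ 2 ∂volume ≠ ⊤ := by
    have h := lintegral_rpow_enorm_lt_top_of_eLpNorm_lt_top
      (p := 2) (by norm_num) (by norm_num) hv.2
    rw [show ((2 : ℝ≥0∞).toReal) = (2 : ℝ) by norm_num] at h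
    simp only [ENNReal.rpow_two, enorm_eq_nnnorm] at h
    exact h.ne
  have hI0 : I = 0 := by
    refine le_antisymm ?_ (by positivity)
    refine ENNReal.le_of_forall_pos_le_add fun ε hε _ => ?_
    rw [zero_add]
    set ε' : ℝ≥0∞ := (ε : ℝ≥0∞) / (2 * (ENNReal.ofReal c + 1)) with hε'def
    have hden_ne0 : (2 * (ENNReal.ofReal c + 1) : ℝ≥0∞) ≠ 0 := by
      simp
    have hden_netop : (2 * (ENNReal.ofReal c + 1) : ℝ≥0∞) ≠ ⊤ := by
      simp [ENNReal.mul_eq_top, ENNReal.ofReal_ne_top]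
    have hε'pos : ε' ≠ 0 := by
      rw [hε'def]
      simp [ENNReal.div_eq_zero_iff, hε.ne', hden_netop]
    have hε'2 : (ε' ^ 2 : ℝ≥0∞) ≠ 0 := pow_ne_zero _ hε'pos
    have hsumfin : ∫⁻ t, ((‖Real.exp (-(ρ * t)) • u t‖₊ : ℝ≥0∞) ^ 2 +
        (‖Real.exp (-(ρ * t)) • v t‖₊ : ℝ≥0∞) ^ 2) ∂volume ≠ ⊤ := by
      rw [lintegral_add_left' (f := fun t => (‖Real.exp (-(ρ * t)) • u t‖₊ : ℝ≥0∞) ^ 2)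
        ((hu.aestronglyMeasurable.enorm).pow_const 2)]
      exact ENNReal.add_ne_top.mpr ⟨hufin, hvfin⟩
    obtain ⟨b, hb⟩ := tail_small hsumfin hε'2
    have hhalf : ((ε' : ℝ≥0∞) ^ (2 : ℕ)) ^ (1 / 2 : ℝ) = ε' := by
      rw [← ENNReal.rpow_natCast, ← ENNReal.rpow_mul]
      norm_num
    have htail : ∀ w : ℝ → H,
        (∫⁻ t in Set.Iio b, (‖Real.exp (-(ρ * t)) • w t‖₊ : ℝ≥0∞) ^ 2 ∂volume) < ε' ^ 2 →
        eLpNorm (fun t => Real.exp (-(ρ * t)) • w t) 2 (volume.restrict (Set.Iio b)) < ε' := by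
      intro w hw
      rw [eLp2]
      calc (∫⁻ t in Set.Iio b, (‖Real.exp (-(ρ * t)) • w t‖₊ : ℝ≥0∞) ^ 2 ∂volume) ^ (1 / 2 : ℝ)
          < ((ε' : ℝ≥0∞) ^ (2 : ℕ)) ^ (1 / 2 : ℝ) :=
            ENNReal.rpow_lt_rpow hw (by norm_num)
        _ = ε' := hhalf
    have htailu : eLpNorm (fun t => Real.exp (-(ρ * t)) • u t) 2
        (volume.restrict (Set.Iio b)) < ε' := by
      refine htail u (lt_of_le_of_lt ?_ hb)
      exact lintegral_mono fun t => le_add_right le_rfl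
    have htailv : eLpNorm (fun t => Real.exp (-(ρ * t)) • v t) 2
        (volume.restrict (Set.Iio b)) < ε' := by
      refine htail v (lt_of_le_of_lt ?_ hb)
      exact lintegral_mono fun t => le_add_left le_rfl
    set ub : ℝ → H := Set.indicator (Set.Ici b) u with hub
    set vb : ℝ → H := Set.indicator (Set.Ici b) v with hvb
    have hUρ := trunc b u hum hu ρ le_rfl
    have hVρ := trunc b v hvm hv ρ le_rfl
    -- indicator identity for the truncation error
    have hindg : ∀ w : ℝ → H,
        (fun t => Real.exp (-(ρ * t)) • (w t - Set.indicator (Set.Ici b) w t))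
        = Set.indicator (Set.Iio b) (fun t => Real.exp (-(ρ * t)) • w t) := by
      intro w
      funext t
      by_cases htb : t ∈ Set.Ici b
      · have hnot : t ∉ Set.Iio b := by simpa using htb
        rw [Set.indicator_of_notMem hnot, Set.indicator_of_mem htb, sub_self, smul_zero]
      · have hmem : t ∈ Set.Iio b := by simpa using not_le.mp (by simpa using htb)
        rw [Set.indicator_of_mem hmem, Set.indicator_of_notMem htb, sub_zero]
    -- error terms
    have herr_u : eLpNorm (fun t => Real.exp (-(ρ * t)) • (F ρ u t - F ρ ub t)) 2
        (volume.restrict (Set.Iio a)) ≤ ENNReal.ofReal c * ε' := by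
      refine le_trans (eLpNorm_mono_measure _ Measure.restrict_le_self) ?_
      refine le_trans (hlip ρ hρ u ub hu hUρ) ?_
      apply mul_le_mul_right
      rw [hub, hindg u, eLpNorm_indicator_eq_eLpNorm_restrict measurableSet_Iio]
      exact le_of_lt htailu
    have herr_v : eLpNorm (fun t => Real.exp (-(ρ * t)) • (F ρ vb t - F ρ v t)) 2
        (volume.restrict (Set.Iio a)) ≤ ENNReal.ofReal c * ε' := by
      refine le_trans (eLpNorm_mono_measure _ Measure.restrict_le_self) ?_
      refine le_trans (hlip ρ hρ vb v hVρ hv) ?_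
      apply mul_le_mul_right
      have hneg : (fun t => Real.exp (-(ρ * t)) • (vb t - v t))
          = -(fun t => Real.exp (-(ρ * t)) • (v t - vb t)) := by
        funext t
        simp [smul_sub, neg_sub]
      rw [hneg, eLpNorm_neg, hvb, hindg v, eLpNorm_indicator_eq_eLpNorm_restrict measurableSet_Iio]
      exact le_of_lt htailv
    have hmid : eLpNorm (fun t => Real.exp (-(ρ * t)) • (F ρ ub t - F ρ vb t)) 2
        (volume.restrict (Set.Iio a)) = 0 := by
      have h0 : (fun t => Real.exp (-(ρ * t)) • (F ρ ub t - F ρ vb t))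
          =ᵐ[volume.restrict (Set.Iio a)] (0 : ℝ → H) := by
        filter_upwards [stepC b] with t ht
        rw [hub, hvb, ht, sub_self, smul_zero]
        rfl
      rw [eLpNorm_congr_ae h0, eLpNorm_zero]
    -- measurability for the triangle inequality
    have hWm : ∀ g h : ℝ → H, MemLp (fun t => Real.exp (-(ρ * t)) • g t) 2 volume →
        MemLp (fun t => Real.exp (-(ρ * t)) • h t) 2 volume →
        AEStronglyMeasurable (fun t => Real.exp (-(ρ * t)) • (g t - h t))
          (volume.restrict (Set.Iio a)) := by
      intro g h hg hh
      have he : (fun t => Real.exp (-(ρ * t)) • (g t - h t))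
          = fun t => (Real.exp (-(ρ * t)) • g t) - (Real.exp (-(ρ * t)) • h t) := by
        funext t; rw [smul_sub]
      rw [he]
      exact (hg.aestronglyMeasurable.sub hh.aestronglyMeasurable).restrict
    have hm1 := hWm (F ρ u) (F ρ ub) (hmap ρ hρ u hu) (hmap ρ hρ ub hUρ)
    have hm2 := hWm (F ρ ub) (F ρ vb) (hmap ρ hρ ub hUρ) (hmap ρ hρ vb hVρ)
    have hm3 := hWm (F ρ vb) (F ρ v) (hmap ρ hρ vb hVρ) (hmap ρ hρ v hv)
    have hsplit : (fun t => Real.exp (-(ρ * t)) • (F ρ u t - F ρ v t))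
        = fun t => (Real.exp (-(ρ * t)) • (F ρ u t - F ρ ub t)) +
            ((Real.exp (-(ρ * t)) • (F ρ ub t - F ρ vb t)) +
             (Real.exp (-(ρ * t)) • (F ρ vb t - F ρ v t))) := by
      funext t
      simp only [← smul_add]
      congr 1
      abel
    have htri : I ≤ eLpNorm (fun t => Real.exp (-(ρ * t)) • (F ρ u t - F ρ ub t)) 2
          (volume.restrict (Set.Iio a)) +
        (eLpNorm (fun t => Real.exp (-(ρ * t)) • (F ρ ub t - F ρ vb t)) 2
          (volume.restrict (Set.Iio a)) +
         eLpNorm (fun t => Real.exp (-(ρ * t)) • (F ρ vb t - F ρ v t)) 2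
          (volume.restrict (Set.Iio a))) := by
      rw [hIdef, hsplit]
      refine le_trans (eLpNorm_add_le hm1 (hm2.add hm3) (by norm_num)) ?_
      exact add_le_add le_rfl (eLpNorm_add_le hm2 hm3 (by norm_num))
    have hIle : I ≤ 2 * (ENNReal.ofReal c + 1) * ε' := by
      refine le_trans htri ?_
      rw [hmid, zero_add]
      calc _ ≤ ENNReal.ofReal c * ε' + ENNReal.ofReal c * ε' := add_le_add herr_u herr_v
        _ = 2 * ENNReal.ofReal c * ε' := by ring
        _ ≤ 2 * (ENNReal.ofReal c + 1) * ε' := by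
            apply mul_le_mul_left
            apply mul_le_mul_right
            exact le_add_right le_rfl
    calc I ≤ 2 * (ENNReal.ofReal c + 1) * ε' := hIle
      _ = (ε : ℝ≥0∞) := by
          rw [hε'def]
          exact ENNReal.mul_div_cancel' (fun h => absurd h hden_ne0) (fun h => absurd h hden_netop)
  -- conclude
  have hsub : AEStronglyMeasurable (fun t => Real.exp (-(ρ * t)) • (F ρ u t - F ρ v t))
      (volume.restrict (Set.Iio a)) := by
    have he : (fun t => Real.exp (-(ρ * t)) • (F ρ u t - F ρ v t))
        = fun t => (Real.exp (-(ρ * t)) • F ρ u t) - (Real.exp (-(ρ * t)) • F ρ v t) := by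
      funext t; rw [smul_sub]
    rw [he]
    exact (((hmap ρ hρ u hu).aestronglyMeasurable).sub
      ((hmap ρ hρ v hv).aestronglyMeasurable)).restrict
  have hae := (eLpNorm_eq_zero_iff hsub (by norm_num)).mp hI0
  filter_upwards [hae] with t ht
  have h := ht
  simp only [Pi.zero_apply, smul_eq_zero] at h
  rcases h with h | h
  · exact absurd h (Real.exp_ne_zero _)
  · exact sub_eq_zero.mp h

/-- let `α > 0`, `ρ₀ > 0`, `c ≥ 0` and let `(F_μ)_{μ ≥ ρ₀}` be a
consistent family of `c`-Lipschitz maps `L²_μ(ℝ;H) → L²_μ(ℝ;H)` (given on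
representatives).  Then for every `ρ ≥ ρ₀` the map `∂_{0,ρ}^{-α} ∘ F_ρ` is causal:
if `u = v` a.e. on `(-∞,a)` then `∂_{0,ρ}^{-α}F_ρ(u) = ∂_{0,ρ}^{-α}F_ρ(v)` a.e. on
`(-∞,a)`, where `(∂_{0,ρ}^{-α}g)(t) = ∫_{-∞}^t (t-s)^(α-1)/Γ(α) · g(s) ds`. -/
theorem stmt16
    {H : Type*} [NormedAddCommGroup H] [InnerProductSpace ℂ H] [CompleteSpace H]
    (α ρ₀ c : ℝ) (hα : 0 < α) (hρ₀ : 0 < ρ₀) (hc : 0 ≤ c)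
    (F : ℝ → (ℝ → H) → (ℝ → H))
    (hmap : ∀ μ ≥ ρ₀, ∀ u : ℝ → H,
      MemLp (fun t : ℝ => Real.exp (-(μ * t)) • u t) 2 volume →
      MemLp (fun t : ℝ => Real.exp (-(μ * t)) • F μ u t) 2 volume)
    (hcong : ∀ μ ≥ ρ₀, ∀ u v : ℝ → H,
      MemLp (fun t : ℝ => Real.exp (-(μ * t)) • u t) 2 volume →
      u =ᵐ[volume] v → F μ u =ᵐ[volume] F μ v)
    (hlip : ∀ μ ≥ ρ₀, ∀ u v : ℝ → H,
      MemLp (fun t : ℝ => Real.exp (-(μ * t)) • u t) 2 volume →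
      MemLp (fun t : ℝ => Real.exp (-(μ * t)) • v t) 2 volume →
      eLpNorm (fun t : ℝ => Real.exp (-(μ * t)) • (F μ u t - F μ v t)) 2 volume ≤
        ENNReal.ofReal c *
          eLpNorm (fun t : ℝ => Real.exp (-(μ * t)) • (u t - v t)) 2 volume)
    (hcons : ∀ μ ν : ℝ, ρ₀ ≤ μ → μ ≤ ν → ∀ g : ℝ → H,
      MemLp (fun t : ℝ => Real.exp (-(μ * t)) • g t) 2 volume →
      MemLp (fun t : ℝ => Real.exp (-(ν * t)) • g t) 2 volume →
      F μ g =ᵐ[volume] F ν g) :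
    ∀ ρ ≥ ρ₀, ∀ a : ℝ, ∀ u v : ℝ → H,
      MemLp (fun t : ℝ => Real.exp (-(ρ * t)) • u t) 2 volume →
      MemLp (fun t : ℝ => Real.exp (-(ρ * t)) • v t) 2 volume →
      u =ᵐ[volume.restrict (Set.Iio a)] v →
      (fun t : ℝ => ∫ s in Set.Iic t, ((t - s) ^ (α - 1) / Real.Gamma α) • F ρ u s)
        =ᵐ[volume.restrict (Set.Iio a)]
      (fun t : ℝ => ∫ s in Set.Iic t,
        ((t - s) ^ (α - 1) / Real.Gamma α) • F ρ v s) := by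
  intro ρ hρ a u v hu hv huv
  have hFeq : F ρ u =ᵐ[volume.restrict (Set.Iio a)] F ρ v :=
    key ρ₀ c hρ₀ F hmap hlip hcons ρ hρ a u v hu hv huv
  have hpt : ∀ t : ℝ, t < a →
      (∫ s in Set.Iic t, ((t - s) ^ (α - 1) / Real.Gamma α) • F ρ u s)
        = ∫ s in Set.Iic t, ((t - s) ^ (α - 1) / Real.Gamma α) • F ρ v s := by
    intro t ht
    apply integral_congr_ae
    have hsub : Set.Iic t ⊆ Set.Iio a := fun s hs => lt_of_le_of_lt hs ht
    have h := ae_restrict_of_ae_restrict_of_subset hsub hFeq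
    filter_upwards [h] with s hs
    rw [hs]
  filter_upwards [ae_restrict_mem measurableSet_Iio] with t ht
  exact hpt t ht
end
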